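/- G = Q·ι(H): every g ∈ GSp(4,k) can be written as g = q·ι(h) for some q ∈ Q and h ∈ H (first part of Lemma 2.3, the double coset decomposition G = QH). -/

import Mathlib

open Matrix

/-- The standard symplectic matrix `J = ((0,E₂),(−E₂,0))` of `GSp(4)`. -/
def J4 (k : Type*) [Field k] : Matrix (Fin 4) (Fin 4) k :=
  !![0, 0, 1, 0; 0, 0, 0, 1; -1, 0, 0, 0; 0, -1, 0, 0]

/-- Membership in `G = GSp(4,k)`. -/
def IsGSp {k : Type*} [Field k] (g : Matrix (Fin 4) (Fin 4) k) : Prop :=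
  IsUnit g.det ∧ ∃ lam : k, lam ≠ 0 ∧ gᵀ * J4 k * g = lam • J4 k

/-- The Klingen parabolic `Q = {g ∈ G : g·(k·e₁) = k·e₁}`. -/
def Qset (k : Type*) [Field k] : Set (Matrix (Fin 4) (Fin 4) k) :=
  {g | IsGSp g ∧ ∃ mu : k, mu ≠ 0 ∧
    g.mulVec ![1, 0, 0, 0] = mu • (![1, 0, 0, 0] : Fin 4 → k)}

/-- The embedding `ι : H → GL(4,k)`. -/
def iota {k K : Type*} [Field k] [Field K] (α : k) (c1 c2 : K → k)
    (m : Matrix (Fin 2) (Fin 2) K) : Matrix (Fin 4) (Fin 4) k :=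
  !![c1 (m 0 0), c2 (m 0 0) * α, c1 (m 0 1), c2 (m 0 1);
     c2 (m 0 0), c1 (m 0 0), c2 (m 0 1), c1 (m 0 1) / α;
     c1 (m 1 0), c2 (m 1 0) * α, c1 (m 1 1), c2 (m 1 1);
     c2 (m 1 0) * α, c1 (m 1 0) * α, c2 (m 1 1) * α, c1 (m 1 1)]

/-- Membership in `H = {g ∈ GL(2,K) : det g ∈ kˣ}`. -/
def InH {k K : Type*} [Field k] [Field K] [Algebra k K]
    (m : Matrix (Fin 2) (Fin 2) K) : Prop :=
  ∃ d : k, d ≠ 0 ∧ m.det = algebraMap k K d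

/-!
Identify `k⁴` with `K²` by `x ↦ (x₀ + x₁√α, x₂ + (x₃/α)√α)`. Under this identification `ι(m)` acts
as `m`, and the symplectic form `⟨x, Jy⟩` is the `k`-part of `det(x, y)`; hence `ι(m)` is a
similitude with multiplier `det m` whenever `det m ∈ kˣ`. Since `SL(2,K)` acts transitively on the
nonzero vectors of `K²`, some `h ∈ SL(2,K) ⊆ H` has `ι(h) g⁻¹e₁ = e₁`, so `q = g ι(h)⁻¹` fixes `e₁`
and `g = q ι(h)`.
-/

section Bilinear

variable {R n : Type*} [CommRing R] [Fintype n]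

lemma Matrix.ext_of_dotProduct_mulVec [DecidableEq n] {M N : Matrix n n R}
    (h : ∀ x y, x ⬝ᵥ (M *ᵥ y) = x ⬝ᵥ (N *ᵥ y)) : M = N := by
  refine ext_of_mulVec_single fun j => funext fun i => ?_
  simpa only [single_one_dotProduct] using h (Pi.single i 1) (Pi.single j 1)

lemma Matrix.dotProduct_transpose_mul_mul_mulVec (A B : Matrix n n R) (x y : n → R) :
    x ⬝ᵥ ((Aᵀ * B * A) *ᵥ y) = (A *ᵥ x) ⬝ᵥ (B *ᵥ (A *ᵥ y)) := by
  rw [← mulVec_mulVec, ← mulVec_mulVec, dotProduct_mulVec, vecMul_transpose]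

lemma Matrix.det_of_mulVec_mulVec (m : Matrix (Fin 2) (Fin 2) R) (X Y : Fin 2 → R) :
    (of ![m *ᵥ X, m *ᵥ Y]).det = m.det * (of ![X, Y]).det := by
  simp only [mulVec_fin_two, det_fin_two, of_apply, cons_val', cons_val_zero, cons_val_fin_one,
    cons_val_one]
  ring

end Bilinear

lemma exists_det_eq_one_mulVec_eq {K : Type*} [Field K] {w : Fin 2 → K} (hw : w ≠ 0) :
    ∃ m : Matrix (Fin 2) (Fin 2) K, m.det = 1 ∧ m *ᵥ w = ![1, 0] := by
  by_cases h0 : w 0 = 0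
  · have h1 : w 1 ≠ 0 := fun h1 => hw (funext fun i => by fin_cases i <;> assumption)
    refine ⟨!![0, (w 1)⁻¹; -w 1, 0], ?_, ?_⟩
    · simp [det_fin_two, h1]
    · ext i; fin_cases i <;> simp [mulVec, dotProduct, Fin.sum_univ_two, h0, h1]
  · refine ⟨!![(w 0)⁻¹, 0; -w 1, w 0], ?_, ?_⟩
    · simp [det_fin_two, h0]
    · ext i; fin_cases i <;> simp [mulVec, dotProduct, Fin.sum_univ_two, h0, mul_comm]

section GSp

variable {k : Type*} [Field k]

lemma det_J4 : (J4 k).det = 1 := by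
  simp [J4, det_succ_row_zero, Fin.sum_univ_succ, Fin.succAbove]

lemma IsGSp.of_transpose_mul_mul_eq {M : Matrix (Fin 4) (Fin 4) k} {ν : k} (hν : ν ≠ 0)
    (hM : Mᵀ * J4 k * M = ν • J4 k) : IsGSp M := by
  refine ⟨isUnit_iff_ne_zero.2 fun h0 => hν ?_, ν, hν, hM⟩
  have hd := congrArg det hM
  simp only [det_mul, det_transpose, det_smul, det_J4, h0, Fintype.card_fin] at hd
  simpa using hd.symm

lemma IsGSp.mul {g h : Matrix (Fin 4) (Fin 4) k} (hg : IsGSp g) (hh : IsGSp h) :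
    IsGSp (g * h) := by
  obtain ⟨hgu, lam, hlam, hg⟩ := hg
  obtain ⟨hhu, mu, hmu, hh⟩ := hh
  refine ⟨by rw [det_mul]; exact hgu.mul hhu, lam * mu, mul_ne_zero hlam hmu, ?_⟩
  calc (g * h)ᵀ * J4 k * (g * h) = hᵀ * (gᵀ * J4 k * g) * h := by
        simp only [transpose_mul, Matrix.mul_assoc]
    _ = (lam * mu) • J4 k := by
        rw [hg, Matrix.mul_smul, Matrix.smul_mul, hh, smul_smul]

lemma IsGSp.nonsing_inv {g : Matrix (Fin 4) (Fin 4) k} (hg : IsGSp g) : IsGSp g⁻¹ := by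
  obtain ⟨hgu, lam, hlam, hJ⟩ := hg
  refine ⟨isUnit_nonsing_inv_det g hgu, lam⁻¹, inv_ne_zero hlam, ?_⟩
  have hgt : IsUnit gᵀ.det := by rwa [det_transpose]
  calc g⁻¹ᵀ * J4 k * g⁻¹ = lam⁻¹ • (gᵀ⁻¹ * (gᵀ * J4 k * g) * g⁻¹) := by
        rw [hJ, Matrix.mul_smul, Matrix.smul_mul, smul_smul, inv_mul_cancel₀ hlam, one_smul,
          transpose_nonsing_inv]
    _ = lam⁻¹ • J4 k := by
        rw [Matrix.mul_assoc, mul_nonsing_inv_cancel_right _ _ hgu,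
          nonsing_inv_mul_cancel_left _ _ hgt]

lemma mul_nonsing_inv_mem_Qset {g M : Matrix (Fin 4) (Fin 4) k} (hg : IsGSp g) (hM : IsGSp M)
    (hMg : M *ᵥ (g⁻¹ *ᵥ ![1, 0, 0, 0]) = ![1, 0, 0, 0]) : g * M⁻¹ ∈ Qset k := by
  refine ⟨hg.mul hM.nonsing_inv, 1, one_ne_zero, ?_⟩
  have hMinv : M⁻¹ *ᵥ ![1, 0, 0, 0] = g⁻¹ *ᵥ ![1, 0, 0, 0] := by
    conv_lhs => rw [← hMg]
    rw [mulVec_mulVec, nonsing_inv_mul _ hM.1, one_mulVec]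
  rw [one_smul, ← mulVec_mulVec, hMinv, mulVec_mulVec, mul_nonsing_inv _ hg.1, one_mulVec]

end GSp

section Coordinates

variable {k K : Type*} [Field k] [Field K] [Algebra k K]

structure QuadraticCoords (α : k) (r : K) (c1 c2 : K → k) : Prop where
  mul_self : r * r = algebraMap k K α
  repr : ∀ x : K, x = algebraMap k K (c1 x) + algebraMap k K (c2 x) * r
  indep : ∀ y1 y2 : k, algebraMap k K y1 + algebraMap k K y2 * r = 0 → y1 = 0 ∧ y2 = 0

def toK2 (α : k) (r : K) (x : Fin 4 → k) : Fin 2 → K :=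
  ![algebraMap k K (x 0) + algebraMap k K (x 1) * r,
    algebraMap k K (x 2) + algebraMap k K (x 3 / α) * r]

lemma toK2_zero (α : k) (r : K) : toK2 α r 0 = 0 := by
  ext i; fin_cases i <;> simp [toK2]

namespace QuadraticCoords

variable {α : k} {r : K} {c1 c2 : K → k}

lemma coords_eq (hc : QuadraticCoords α r c1 c2) {x : K} {y1 y2 : k}
    (hx : x = algebraMap k K y1 + algebraMap k K y2 * r) : c1 x = y1 ∧ c2 x = y2 := by
  have h := hc.indep (c1 x - y1) (c2 x - y2) (by
    rw [map_sub, map_sub]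
    linear_combination hx - hc.repr x)
  exact ⟨sub_eq_zero.mp h.1, sub_eq_zero.mp h.2⟩

lemma alpha_ne_zero (hc : QuadraticCoords α r c1 c2) : α ≠ 0 := by
  rintro rfl
  have hr : r = 0 := mul_self_eq_zero.mp (by simpa using hc.mul_self)
  simpa [hr] using hc.indep 0 1

lemma r_ne_zero (hc : QuadraticCoords α r c1 c2) : r ≠ 0 := fun h =>
  hc.alpha_ne_zero (by simpa [h] using hc.mul_self.symm)

lemma c1_algebraMap_mul (hc : QuadraticCoords α r c1 c2) (d : k) (x : K) :
    c1 (algebraMap k K d * x) = d * c1 x :=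
  (hc.coords_eq (y2 := d * c2 x) (by
    conv_lhs => rw [hc.repr x]
    simp only [map_mul]
    ring)).1

lemma toK2_injective (hc : QuadraticCoords α r c1 c2) : Function.Injective (toK2 α r) := by
  intro x y hxy
  simp only [toK2, funext_iff, Fin.forall_fin_two, cons_val_zero, cons_val_one] at hxy
  have h0 := hc.indep (x 0 - y 0) (x 1 - y 1) (by
    simp only [map_sub]; linear_combination hxy.1)
  have h2 := hc.indep (x 2 - y 2) (x 3 / α - y 3 / α) (by
    simp only [map_sub]; linear_combination hxy.2)
  have h3 : x 3 = y 3 := by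
    simpa [div_left_inj' hc.alpha_ne_zero] using sub_eq_zero.mp h2.2
  funext i
  fin_cases i
  · exact sub_eq_zero.mp h0.1
  · exact sub_eq_zero.mp h0.2
  · exact sub_eq_zero.mp h2.1
  · exact h3

lemma toK2_iota_mulVec (hc : QuadraticCoords α r c1 c2) (m : Matrix (Fin 2) (Fin 2) K)
    (x : Fin 4 → k) : toK2 α r (iota α c1 c2 m *ᵥ x) = m *ᵥ toK2 α r x := by
  have hr := hc.r_ne_zero
  have hm : ∀ i j, m i j = algebraMap k K (c1 (m i j)) + algebraMap k K (c2 (m i j)) * r :=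
    fun i j => hc.repr _
  ext i
  fin_cases i <;>
  · simp only [toK2, iota, mulVec, dotProduct, Fin.sum_univ_four, Fin.sum_univ_two, of_apply,
      cons_val', cons_val_fin_one, cons_val_zero, cons_val_one, cons_val, Fin.zero_eta, Fin.mk_one,
      map_add, map_mul, map_div₀]
    conv_rhs => rw [hm _ 0, hm _ 1]
    simp only [← hc.mul_self]
    field_simp
    ring

lemma dotProduct_J4_mulVec (hc : QuadraticCoords α r c1 c2) (x y : Fin 4 → k) :
    x ⬝ᵥ (J4 k *ᵥ y) = c1 (of ![toK2 α r x, toK2 α r y]).det := by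
  have hr := hc.r_ne_zero
  rw [(hc.coords_eq (y1 := x 0 * y 2 + x 1 * y 3 - x 2 * y 0 - x 3 * y 1)
    (y2 := (x 0 * y 3 - x 3 * y 0) / α + x 1 * y 2 - x 2 * y 1) ?_).1]
  · simp only [J4, dotProduct, mulVec, Fin.sum_univ_four, of_apply, cons_val', cons_val_fin_one,
      cons_val_zero, cons_val_one, cons_val, zero_mul, add_zero, one_mul, zero_add, neg_mul,
      mul_neg]
    ring
  · simp only [toK2, det_fin_two_of, map_div₀, map_sub, map_add, map_mul]
    simp only [← hc.mul_self]
    field_simp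
    ring

lemma iota_transpose_mul_J4_mul (hc : QuadraticCoords α r c1 c2) {m : Matrix (Fin 2) (Fin 2) K}
    {d : k} (hm : m.det = algebraMap k K d) :
    (iota α c1 c2 m)ᵀ * J4 k * iota α c1 c2 m = d • J4 k := by
  refine ext_of_dotProduct_mulVec fun x y => ?_
  rw [dotProduct_transpose_mul_mul_mulVec, hc.dotProduct_J4_mulVec, hc.toK2_iota_mulVec,
    hc.toK2_iota_mulVec, det_of_mulVec_mulVec, hm, hc.c1_algebraMap_mul,
    ← hc.dotProduct_J4_mulVec, smul_mulVec, dotProduct_smul, smul_eq_mul]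

lemma isGSp_iota (hc : QuadraticCoords α r c1 c2) {m : Matrix (Fin 2) (Fin 2) K}
    (hm : InH (k := k) m) : IsGSp (iota α c1 c2 m) :=
  let ⟨_, hd, hdet⟩ := hm
  .of_transpose_mul_mul_eq hd (hc.iota_transpose_mul_J4_mul hdet)

end QuadraticCoords

end Coordinates

theorem statement6_general
    {k K : Type*} [Field k] [Field K] [Algebra k K]
    (α : k)
    (r : K) (hr : r * r = algebraMap k K α)
    (c1 c2 : K → k)
    (hrepr : ∀ x : K, x = algebraMap k K (c1 x) + algebraMap k K (c2 x) * r)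
    (hindep : ∀ y1 y2 : k, algebraMap k K y1 + algebraMap k K y2 * r = 0 →
      y1 = 0 ∧ y2 = 0) :
    ∀ g : Matrix (Fin 4) (Fin 4) k, IsGSp g →
      ∃ q ∈ Qset k, ∃ h : Matrix (Fin 2) (Fin 2) K,
        InH (k := k) h ∧ g = q * iota α c1 c2 h := by
  intro g hg
  have hc : QuadraticCoords α r c1 c2 := ⟨hr, hrepr, hindep⟩
  set v := g⁻¹ *ᵥ ![1, 0, 0, 0]
  have hv : v ≠ 0 := fun hv => by
    simpa [hv] using congrFun (show g *ᵥ v = ![1, 0, 0, 0] by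
      rw [mulVec_mulVec, mul_nonsing_inv _ hg.1, one_mulVec]) 0
  have hw : toK2 α r v ≠ 0 := fun hw => hv (hc.toK2_injective (hw.trans (toK2_zero α r).symm))
  obtain ⟨h, hdet, hhv⟩ := exists_det_eq_one_mulVec_eq hw
  have hH : InH (k := k) h := ⟨1, one_ne_zero, by rw [hdet, map_one]⟩
  have hιv : iota α c1 c2 h *ᵥ v = ![1, 0, 0, 0] :=
    hc.toK2_injective (by rw [hc.toK2_iota_mulVec, hhv]; simp [toK2])
  exact ⟨_, mul_nonsing_inv_mem_Qset hg (hc.isGSp_iota hH) hιv, h, hH,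
    (nonsing_inv_mul_cancel_right _ _ (hc.isGSp_iota hH).1).symm⟩

/-- `G = Q·ι(H)`: every `g ∈ GSp(4,k)` is `g = q·ι(h)` with `q ∈ Q`, `h ∈ H`. -/
theorem statement6
    {k K : Type*} [Field k] [Field K] [Algebra k K]
    (hchar : (2 : k) ≠ 0)
    (α : k) (hα : α ≠ 0) (hns : ¬ IsSquare α)
    (r : K) (hr : r * r = algebraMap k K α)
    (c1 c2 : K → k)
    (hrepr : ∀ x : K, x = algebraMap k K (c1 x) + algebraMap k K (c2 x) * r)
    (hindep : ∀ y1 y2 : k, algebraMap k K y1 + algebraMap k K y2 * r = 0 →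
      y1 = 0 ∧ y2 = 0) :
    ∀ g : Matrix (Fin 4) (Fin 4) k, IsGSp g →
      ∃ q ∈ Qset k, ∃ h : Matrix (Fin 2) (Fin 2) K,
        InH (k := k) h ∧ g = q * iota α c1 c2 h :=
  statement6_general α r hr c1 c2 hrepr hindep
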